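/- Distribution of the sum: let N ~ MPMRF(λ, α, T), choose any root r with the convention α_{(pa(r),r)} = 0, and set M = Σ_{v∈V} N_v. Then M has a compound Poisson distribution: its pgf satisfies E[t^M] = exp( λ_M (P_C(t) − 1) ) for t ∈ [−1,1], where λ_M = λ(d − Σ_{e∈E} α_e) > 0 and P_C(t) = Σ_{v∈V} [ (1 − α_{(pa(v),v)}) / (d − Σ_{e∈E} α_e) ] · η_v(t·1), with η_v the recursively defined polynomials η_v(t·1) = t ∏_{j∈ch(v)} (1 − α_{(v,j)} + α_{(v,j)} η_j(t·1)) (η_v(t·1) = t for leaves). Moreover P_C is the pgf of an ℕ-valued random variable C_M with mean E[C_M] = d / (d − Σ_{e∈E} α_e). -/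

import Mathlib

open MeasureTheory ProbabilityTheory
open scoped ProbabilityTheory

/-- The Poisson probability mass function with mean `lam`, evaluated at `k`. -/
noncomputable def poissonProb (lam : ℝ) (k : ℕ) : ℝ :=
  Real.exp (-lam) * lam ^ k / (Nat.factorial k)

/-- The MPMRF construction: a tree-structured Markov random field with Poisson(`lam`)
marginals, built on a tree `G` rooted at `root` via the stochastic representation
`N_root = L_root` and `N_v = α_{(pa v, v)} ∘ N_{pa v} + L_v` for `v ≠ root`, where `∘`
denotes binomial thinning (realized through the i.i.d. Bernoulli indicators `I v i`),
the innovations `L_v` are Poisson, and all innovations and indicator sequences are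
mutually independent. -/
structure MPMRF {V : Type} [Fintype V] [DecidableEq V]
    (G : SimpleGraph V) (lam : ℝ) (alpha : Sym2 V → ℝ)
    (Ω : Type) [MeasureSpace Ω] : Type where
  /-- the underlying graph is a tree -/
  isTree : G.IsTree
  lam_pos : 0 < lam
  alpha_mem : ∀ e ∈ G.edgeSet, alpha e ∈ Set.Icc (0 : ℝ) 1
  /-- the chosen root -/
  root : V
  /-- the parent function of the rooted tree -/
  pa : V → V
  pa_adj : ∀ v, v ≠ root → G.Adj (pa v) v
  pa_dist : ∀ v, v ≠ root → G.dist root (pa v) + 1 = G.dist root v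
  /-- innovation random variables -/
  L : V → Ω → ℕ
  /-- Bernoulli indicators used in the binomial thinnings -/
  I : V → ℕ → Ω → ℕ
  /-- the components of the Markov random field -/
  N : V → Ω → ℕ
  meas_L : ∀ v, Measurable (L v)
  meas_I : ∀ v i, Measurable (I v i)
  meas_N : ∀ v, Measurable (N v)
  I_le_one : ∀ v i ω, I v i ω ≤ 1
  I_bern : ∀ v, v ≠ root → ∀ i,
    ℙ {ω | I v i ω = 1} = ENNReal.ofReal (alpha s(pa v, v))
  L_root_poisson : ∀ k, ℙ {ω | L root ω = k} = ENNReal.ofReal (poissonProb lam k)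
  L_poisson : ∀ v, v ≠ root → ∀ k,
    ℙ {ω | L v ω = k} =
      ENNReal.ofReal (poissonProb (lam * (1 - alpha s(pa v, v))) k)
  /-- the innovations and all indicator variables are mutually independent -/
  indep : iIndepFun
    (Sum.elim L (fun p : V × ℕ => I p.1 p.2)) ℙ
  N_root : N root = L root
  N_rec : ∀ v, v ≠ root → ∀ ω,
    N v ω = (∑ i ∈ Finset.range (N (pa v) ω), I v i ω) + L v ω

/-!
Let `T_v(n)` be the total count in the subtree rooted at `v` when the parent of `v` holds `n`
individuals. Given `N_v`, the subtrees of the children of `v` are driven by innovations and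
thinning indicators disjoint from those at `v` and from each other, so conditioning on `N_v`
and inducting from the leaves gives
`E[t^{T_v(n)}] = ψ_v^n · exp(λ Σ_{u ≤ v} (1 - α_u)(η_u(t) - 1))`, `ψ_v = 1 - α_v + α_v η_v(t)`.
At the root (`n = 0`) this is `exp(λ_M (P_C(t) - 1))` with `P_C = Σ_u w_u η_u`,
`w_u = (1 - α_u) / (d - Σ_e α_e)`. Each `η_u` is a polynomial with nonnegative coefficients and
`η_u(1) = 1`, so `P_C` is a pgf; its mean comes from `η_v'(1) = 1 + Σ_{j child of v} α_j η_j'(1)`.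
-/

namespace MeasureTheory

variable {Ω ι β : Type*} [MeasurableSpace β]

abbrev comapOn (X : ι → Ω → β) (S : Set ι) : MeasurableSpace Ω :=
  ⨆ i ∈ S, MeasurableSpace.comap (X i) inferInstance

variable {X : ι → Ω → β} {S T : Set ι}

lemma comapOn_mono (h : S ⊆ T) : comapOn X S ≤ comapOn X T :=
  biSup_mono h

lemma comapOn_le {mΩ : MeasurableSpace Ω} (hX : ∀ i, Measurable (X i)) : comapOn X S ≤ mΩ :=
  iSup₂_le fun i _ => (hX i).comap_le

lemma measurable_comapOn {i : ι} (hi : i ∈ S) : Measurable[comapOn X S] (X i) :=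
  Measurable.of_comap_le (le_iSup₂ (f := fun i _ => MeasurableSpace.comap (X i) _) i hi)

lemma measurable_apply_nat {_ : MeasurableSpace Ω} {R : Ω → ℕ} (hR : Measurable R)
    {F : ℕ → Ω → β} (hF : ∀ n, Measurable (F n)) : Measurable fun ω => F (R ω) ω :=
  (measurable_from_prod_countable_left (f := fun p : Ω × ℕ => F p.2 p.1) hF).comp
    (measurable_id.prodMk hR)

end MeasureTheory

namespace ProbabilityTheory

variable {Ω : Type*}

lemma integral_mul_eq_mul_integral_of_indep {m₁ m₂ mΩ : MeasurableSpace Ω} {μ : Measure Ω}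
    (hind : Indep m₁ m₂ μ) (h₁ : m₁ ≤ mΩ) (h₂ : m₂ ≤ mΩ) {f g : Ω → ℝ}
    (hf : Measurable[m₁] f) (hg : Measurable[m₂] g) :
    ∫ ω, f ω * g ω ∂μ = (∫ ω, f ω ∂μ) * ∫ ω, g ω ∂μ := by
  have hfg : IndepFun f g μ := by
    rw [IndepFun_iff_Indep]
    exact indep_of_indep_of_le_right (indep_of_indep_of_le_left hind hf.comap_le) hg.comap_le
  exact hfg.integral_fun_mul_eq_mul_integral
    (hf.mono h₁ le_rfl : Measurable f).aestronglyMeasurable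
    (hg.mono h₂ le_rfl : Measurable g).aestronglyMeasurable

variable {mΩ : MeasurableSpace Ω} {μ : Measure Ω} {ι β : Type*} [MeasurableSpace β]
  {X : ι → Ω → β}

lemma iIndepFun.indep_comapOn (hX : iIndepFun X μ) (hXm : ∀ i, Measurable (X i))
    {S T : Set ι} (hST : Disjoint S T) : Indep (comapOn X S) (comapOn X T) μ :=
  indep_iSup_of_disjoint (fun i => (hXm i).comap_le) hX.iIndep hST

lemma iIndepFun.integral_prod_of_pairwiseDisjoint {κ : Type*} [DecidableEq κ]
    (hX : iIndepFun X μ) (hXm : ∀ i, Measurable (X i)) (s : Finset κ) {S : κ → Set ι}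
    (hS : (s : Set κ).PairwiseDisjoint S) {F : κ → Ω → ℝ}
    (hF : ∀ j ∈ s, Measurable[comapOn X (S j)] (F j)) :
    ∫ ω, ∏ j ∈ s, F j ω ∂μ = ∏ j ∈ s, ∫ ω, F j ω ∂μ := by
  induction s using Finset.induction with
  | empty => simp [hX.isProbabilityMeasure]
  | insert b s hb ih =>
    have hrest : Measurable[comapOn X (⋃ j ∈ s, S j)] fun ω => ∏ j ∈ s, F j ω :=
      Finset.measurable_prod _ fun j hj =>
        (hF j (Finset.mem_insert_of_mem hj)).mono
          (comapOn_mono (Set.subset_biUnion_of_mem hj)) le_rfl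
    have hdisj : Disjoint (S b) (⋃ j ∈ s, S j) :=
      Set.disjoint_iUnion₂_right.2 fun j hj =>
        hS (by simp) (by simp [hj]) fun h => hb (h ▸ hj)
    simp only [Finset.prod_insert hb]
    rw [integral_mul_eq_mul_integral_of_indep (hX.indep_comapOn hXm hdisj) (comapOn_le hXm)
      (comapOn_le hXm) (hF b (Finset.mem_insert_self b s)) hrest,
      ih (hS.subset (by simp)) fun j hj => hF j (Finset.mem_insert_of_mem hj)]

lemma integral_comp_nat_eq_tsum_of_indep {m₁ m₂ mΩ : MeasurableSpace Ω} {μ : Measure Ω}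
    [IsFiniteMeasure μ] (hind : Indep m₁ m₂ μ) (h₁ : m₁ ≤ mΩ) (h₂ : m₂ ≤ mΩ) {R : Ω → ℕ}
    (hR : Measurable[m₁] R)
    {Z : ℕ → Ω → ℝ} (hZ : ∀ n, Measurable[m₂] (Z n)) {C : ℝ} (hC : ∀ n ω, |Z n ω| ≤ C) :
    ∫ ω, Z (R ω) ω ∂μ = ∑' n, μ.real (R ⁻¹' {n}) * ∫ ω, Z n ω ∂μ := by
  have hRm : Measurable R := hR.mono h₁ le_rfl
  have hZm : ∀ n, Measurable (Z n) := fun n => (hZ n).mono h₂ le_rfl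
  have hfiber : ∀ n, MeasurableSet (R ⁻¹' {n}) := fun n => hRm (measurableSet_singleton n)
  have hcover : ⋃ n, R ⁻¹' {n} = Set.univ := by
    rw [← Set.preimage_iUnion, Set.iUnion_of_singleton, Set.preimage_univ]
  have hint : Integrable (fun ω => Z (R ω) ω) μ :=
    Integrable.of_bound (measurable_apply_nat hRm hZm).aestronglyMeasurable C
      (ae_of_all _ fun ω => hC _ ω)
  calc ∫ ω, Z (R ω) ω ∂μ = ∑' n, ∫ ω in R ⁻¹' {n}, Z (R ω) ω ∂μ := by
        rw [← integral_iUnion hfiber (pairwise_disjoint_fiber R)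
          (by rw [hcover]; exact hint.integrableOn), hcover, setIntegral_univ]
    _ = ∑' n, ∫ ω, (R ⁻¹' {n}).indicator 1 ω * Z n ω ∂μ := by
        congr 1 with n
        rw [setIntegral_congr_fun (hfiber n) fun ω (hω : R ω = n) => by rw [hω],
          ← integral_indicator (hfiber n)]
        congr 1 with ω
        by_cases hω : ω ∈ R ⁻¹' {n} <;> simp [hω]
    _ = ∑' n, μ.real (R ⁻¹' {n}) * ∫ ω, Z n ω ∂μ := by
        congr 1 with n
        have h1 : Measurable[m₁] ((R ⁻¹' {n}).indicator (1 : Ω → ℝ)) :=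
          measurable_const.indicator (hR (measurableSet_singleton n))
        rw [integral_mul_eq_mul_integral_of_indep hind h₁ h₂ h1 (hZ n),
          integral_indicator_one (hfiber n)]

lemma integral_comp_nat_eq_tsum {mΩ : MeasurableSpace Ω} {μ : Measure Ω} [IsProbabilityMeasure μ]
    {R : Ω → ℕ} (hR : Measurable R)
    {f : ℕ → ℝ} {C : ℝ} (hC : ∀ n, |f n| ≤ C) :
    ∫ ω, f (R ω) ∂μ = ∑' n, μ.real (R ⁻¹' {n}) * f n := by
  simpa using integral_comp_nat_eq_tsum_of_indep (indep_bot_right (μ := μ) mΩ) le_rfl bot_le hR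
    (fun n => measurable_const (a := f n)) fun n _ => hC n

end ProbabilityTheory

lemma abs_pow_le_one {t : ℝ} (ht : |t| ≤ 1) (k : ℕ) : |t ^ k| ≤ 1 :=
  (abs_pow t k).trans_le (pow_le_one₀ (abs_nonneg t) ht)

lemma poissonProb_nonneg {mu : ℝ} (hmu : 0 ≤ mu) (k : ℕ) : 0 ≤ poissonProb mu k := by
  unfold poissonProb
  positivity

lemma tsum_poissonProb_mul_pow (mu s : ℝ) :
    ∑' k, poissonProb mu k * s ^ k = Real.exp (mu * (s - 1)) := by
  have h : ∀ k, poissonProb mu k * s ^ k = Real.exp (-mu) * ((mu * s) ^ k / k.factorial) := by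
    intro k
    rw [poissonProb, mul_pow]
    ring
  have hexp : ∑' k : ℕ, (mu * s) ^ k / k.factorial = Real.exp (mu * s) := by
    rw [Real.exp_eq_exp_ℝ, NormedSpace.exp_eq_tsum_div]
  rw [tsum_congr h, tsum_mul_left, hexp, ← Real.exp_add]
  ring_nf

namespace ProbabilityTheory

variable {Ω : Type*} {mΩ : MeasurableSpace Ω} {μ : Measure Ω} [IsProbabilityMeasure μ]

lemma integral_pow_of_poisson {L : Ω → ℕ} (hL : Measurable L) {mu : ℝ} (hmu : 0 ≤ mu)
    (hlaw : ∀ k, μ (L ⁻¹' {k}) = ENNReal.ofReal (poissonProb mu k)) {s : ℝ} (hs : |s| ≤ 1) :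
    ∫ ω, s ^ L ω ∂μ = Real.exp (mu * (s - 1)) := by
  rw [integral_comp_nat_eq_tsum hL (abs_pow_le_one hs), ← tsum_poissonProb_mul_pow]
  congr 1 with k
  rw [measureReal_def, hlaw, ENNReal.toReal_ofReal (poissonProb_nonneg hmu k)]

lemma integral_pow_of_bernoulli {I : Ω → ℕ} (hI : Measurable I) (hle : ∀ ω, I ω ≤ 1) {p : ℝ}
    (hp : 0 ≤ p) (hlaw : μ {ω | I ω = 1} = ENNReal.ofReal p) (s : ℝ) :
    ∫ ω, s ^ I ω ∂μ = 1 - p + p * s := by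
  have hA : MeasurableSet {ω | I ω = 1} := hI (measurableSet_singleton 1)
  have hpow : ∀ ω, s ^ I ω = 1 + (s - 1) * {ω | I ω = 1}.indicator 1 ω := by
    intro ω
    rcases Nat.le_one_iff_eq_zero_or_eq_one.1 (hle ω) with h | h <;> simp [h]
  have hint : Integrable (fun ω => (s - 1) * {ω | I ω = 1}.indicator (1 : Ω → ℝ) ω) μ :=
    ((integrable_const (1 : ℝ)).indicator hA).const_mul (s - 1)
  simp_rw [hpow]
  rw [integral_add (integrable_const 1) hint, integral_const_mul, integral_indicator_one hA,
    measureReal_def, hlaw, ENNReal.toReal_ofReal hp]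
  simp only [integral_const, probReal_univ, smul_eq_mul]
  ring

end ProbabilityTheory

namespace Polynomial

variable {R : Type*}

def nonnegCoeffs [Semiring R] [PartialOrder R] [IsOrderedRing R] : Subsemiring R[X] where
  carrier := {p | ∀ n, 0 ≤ p.coeff n}
  zero_mem' := by simp
  one_mem' n := by rw [coeff_one]; split_ifs <;> simp
  add_mem' hp hq n := by rw [coeff_add]; exact add_nonneg (hp n) (hq n)
  mul_mem' hp hq n := by
    rw [coeff_mul]; exact Finset.sum_nonneg fun x _ => mul_nonneg (hp _) (hq _)

section OrderedSemiring

variable [Semiring R] [PartialOrder R] [IsOrderedRing R]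

lemma C_mem_nonnegCoeffs {c : R} (hc : 0 ≤ c) : C c ∈ nonnegCoeffs := fun n => by
  rw [coeff_C]; split_ifs <;> simp [hc]

lemma X_mem_nonnegCoeffs : (X : R[X]) ∈ nonnegCoeffs := fun n => by
  rw [coeff_X]; split_ifs <;> simp

end OrderedSemiring

lemma eval_derivative_prod_of_eval_eq_one [CommSemiring R] {ι : Type*} [DecidableEq ι]
    {s : Finset ι} {f : ι → R[X]} {x : R} (hf : ∀ i ∈ s, (f i).eval x = 1) :
    (derivative (∏ i ∈ s, f i)).eval x = ∑ i ∈ s, (derivative (f i)).eval x := by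
  rw [derivative_prod_finset, eval_finsetSum]
  refine Finset.sum_congr rfl fun i _ => ?_
  rw [eval_mul, eval_prod, Finset.prod_eq_one fun j hj => hf j (Finset.mem_of_mem_erase hj),
    one_mul]

lemma abs_eval_le_eval_one {p : ℝ[X]} (hp : p ∈ nonnegCoeffs) {t : ℝ} (ht : |t| ≤ 1) :
    |p.eval t| ≤ p.eval 1 := by
  simp only [eval_eq_sum_range, one_pow, mul_one]
  refine (Finset.abs_sum_le_sum_abs _ _).trans (Finset.sum_le_sum fun i _ => ?_)
  rw [abs_mul, abs_of_nonneg (hp i), abs_pow]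
  exact mul_le_of_le_one_right (hp i) (pow_le_one₀ (abs_nonneg t) ht)

lemma tsum_coeff_mul_pow (p : ℝ[X]) (t : ℝ) : ∑' k, p.coeff k * t ^ k = p.eval t := by
  rw [eval_eq_sum_range, tsum_eq_sum]
  intro k hk
  rw [coeff_eq_zero_of_natDegree_lt (by simpa using hk), zero_mul]

lemma tsum_natCast_mul_coeff (p : ℝ[X]) :
    ∑' k : ℕ, (k : ℝ) * p.coeff k = (derivative p).eval 1 := by
  rw [derivative_eval, sum_over_range p (fun n => by simp),
    tsum_eq_sum (s := Finset.range (p.natDegree + 1))]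
  · simp only [one_pow, one_mul, mul_comm]
  · intro k hk
    rw [coeff_eq_zero_of_natDegree_lt (by simpa using hk), mul_zero]

end Polynomial

namespace MPMRF

open Polynomial

variable {V : Type} [Fintype V] [DecidableEq V] {G : SimpleGraph V} {lam : ℝ}
  {alpha : Sym2 V → ℝ} {Ω : Type} [MeasureSpace Ω] (M : MPMRF G lam alpha Ω)

/-- `α_{(pa v, v)}`, with the convention `α_{(pa r, r)} = 0` at the root. -/
def alphaPa (v : V) : ℝ := if v = M.root then 0 else alpha s(M.pa v, v)

def children (v : V) : Finset V := Finset.univ.filter fun j => j ≠ M.root ∧ M.pa j = v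

noncomputable def depth (v : V) : ℕ := G.dist M.root v

variable {M} in
@[simp]
lemma mem_children {j v : V} : j ∈ M.children v ↔ j ≠ M.root ∧ M.pa j = v := by
  simp [children]

variable {M} in
lemma depth_of_mem_children {j v : V} (hj : j ∈ M.children v) :
    M.depth j = M.depth v + 1 := by
  obtain ⟨hne, hpa⟩ := mem_children.1 hj
  rw [← hpa]
  exact (M.pa_dist j hne).symm

lemma depth_lt_card (v : V) : M.depth v < Fintype.card V := by
  obtain ⟨p⟩ := M.isTree.connected.preconnected M.root v
  exact (SimpleGraph.dist_le p.toPath.1).trans_lt p.toPath.2.length_lt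

lemma card_sub_depth_lt {j v : V} (hj : j ∈ M.children v) :
    Fintype.card V - M.depth j < Fintype.card V - M.depth v := by
  have := M.depth_lt_card j
  have := depth_of_mem_children hj
  omega

theorem children_induction {P : V → Prop} (h : ∀ v, (∀ j ∈ M.children v, P j) → P v) (v : V) :
    P v :=
  (InvImage.wf (fun v => Fintype.card V - M.depth v) wellFounded_lt).induction v
    fun v ih => h v fun j hj => ih j (M.card_sub_depth_lt hj)

lemma sum_sum_children {β : Type*} [AddCommMonoid β] (f : V → β) :
    ∑ v, ∑ j ∈ M.children v, f j = ∑ j ∈ Finset.univ.erase M.root, f j := by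
  rw [← Finset.sum_fiberwise_of_maps_to (s := Finset.univ.erase M.root) (g := M.pa)
    (t := Finset.univ) (fun _ _ => Finset.mem_univ _) f]
  refine Finset.sum_congr rfl fun v _ => Finset.sum_congr ?_ fun _ _ => rfl
  ext j
  simp [and_comm]

def subtreeSum {β : Type*} [AddCommMonoid β] (f : V → β) (v : V) : β :=
  f v + ∑ j ∈ (M.children v).attach, subtreeSum f j
termination_by Fintype.card V - M.depth v
decreasing_by exact M.card_sub_depth_lt j.2

lemma subtreeSum_eq {β : Type*} [AddCommMonoid β] (f : V → β) (v : V) :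
    M.subtreeSum f v = f v + ∑ j ∈ M.children v, M.subtreeSum f j := by
  rw [subtreeSum, Finset.sum_attach (M.children v) (M.subtreeSum f)]

/-- Summing the defining equation of `subtreeSum` over all vertices counts every non-root
subtree sum once on each side, which leaves exactly the root's. -/
lemma subtreeSum_root {β : Type*} [AddCancelCommMonoid β] (f : V → β) :
    M.subtreeSum f M.root = ∑ v, f v := by
  have key := calc
    M.subtreeSum f M.root + ∑ j ∈ Finset.univ.erase M.root, M.subtreeSum f j
        = ∑ v, M.subtreeSum f v := Finset.add_sum_erase _ _ (Finset.mem_univ _)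
    _ = ∑ v, f v + ∑ j ∈ Finset.univ.erase M.root, M.subtreeSum f j := by
        rw [Finset.sum_congr rfl fun v _ => M.subtreeSum_eq f v, Finset.sum_add_distrib,
          M.sum_sum_children]
  exact add_right_cancel key

def descendants (v : V) : Set V :=
  {u | M.depth v ≤ M.depth u ∧ M.pa^[M.depth u - M.depth v] u = v}

lemma self_mem_descendants (v : V) : v ∈ M.descendants v :=
  ⟨le_rfl, by rw [Nat.sub_self, Function.iterate_zero_apply]⟩

variable {M} in
lemma descendants_subset_of_mem_children {j v : V} (hj : j ∈ M.children v) :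
    M.descendants j ⊆ M.descendants v \ {v} := by
  rintro u ⟨hle, hu⟩
  have hdj := depth_of_mem_children hj
  refine ⟨⟨by omega, ?_⟩, fun h => by subst h; omega⟩
  rw [show M.depth u - M.depth v = M.depth u - M.depth j + 1 by omega,
    Function.iterate_succ_apply', hu, (mem_children.1 hj).2]

variable {M} in
lemma disjoint_descendants_of_mem_children {j j' v : V} (hj : j ∈ M.children v)
    (hj' : j' ∈ M.children v) (hne : j ≠ j') :
    Disjoint (M.descendants j) (M.descendants j') := by
  refine Set.disjoint_left.2 fun u ⟨_, hu⟩ ⟨_, hu'⟩ => hne ?_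
  rw [← hu, ← hu', depth_of_mem_children hj, depth_of_mem_children hj']

@[simp]
lemma alphaPa_root : M.alphaPa M.root = 0 := if_pos rfl

lemma alphaPa_of_ne_root {v : V} (hv : v ≠ M.root) : M.alphaPa v = alpha s(M.pa v, v) :=
  if_neg hv

lemma alphaPa_of_mem_children {j v : V} (hj : j ∈ M.children v) :
    M.alphaPa j = alpha s(v, j) := by
  obtain ⟨hne, rfl⟩ := mem_children.1 hj
  exact M.alphaPa_of_ne_root hne

lemma alphaPa_mem_Icc (v : V) : M.alphaPa v ∈ Set.Icc (0 : ℝ) 1 := by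
  by_cases hv : v = M.root
  · simp [hv]
  · rw [M.alphaPa_of_ne_root hv]
    exact M.alpha_mem _ (M.pa_adj v hv)

lemma sum_one_sub_alphaPa_pos : 0 < ∑ v, (1 - M.alphaPa v) := by
  rw [← Finset.add_sum_erase _ _ (Finset.mem_univ M.root), alphaPa_root, sub_zero]
  exact add_pos_of_pos_of_nonneg one_pos
    (Finset.sum_nonneg fun v _ => sub_nonneg.2 (M.alphaPa_mem_Icc v).2)

lemma injOn_parentEdge : Set.InjOn (fun v => s(M.pa v, v)) ↑(Finset.univ.erase M.root) := by
  intro x hx y hy hxy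
  rcases Sym2.eq_iff.1 hxy with ⟨-, h⟩ | ⟨hx', hy'⟩
  · exact h
  · have := M.pa_dist x (Finset.ne_of_mem_erase hx)
    have := M.pa_dist y (Finset.ne_of_mem_erase hy)
    simp only [hx', ← hy'] at *
    omega

section Edges

variable [DecidableRel G.Adj]

/-- A tree on `d` vertices has `d - 1` edges, so the `d - 1` parent edges exhaust them. -/
lemma image_parentEdge_eq_edgeFinset :
    (Finset.univ.erase M.root).image (fun v => s(M.pa v, v)) = G.edgeFinset := by
  refine Finset.eq_of_subset_of_card_le (fun e he => ?_) ?_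
  · obtain ⟨v, hv, rfl⟩ := Finset.mem_image.1 he
    exact SimpleGraph.mem_edgeFinset.2 (M.pa_adj v (Finset.ne_of_mem_erase hv))
  · rw [Finset.card_image_of_injOn M.injOn_parentEdge,
      Finset.card_erase_of_mem (Finset.mem_univ _), Finset.card_univ,
      ← M.isTree.card_edgeFinset, Nat.add_sub_cancel]

lemma sum_edgeFinset_alpha : ∑ e ∈ G.edgeFinset, alpha e = ∑ v, M.alphaPa v := by
  rw [← M.image_parentEdge_eq_edgeFinset, Finset.sum_image M.injOn_parentEdge,
    ← Finset.add_sum_erase _ _ (Finset.mem_univ M.root), alphaPa_root, zero_add]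
  exact Finset.sum_congr rfl fun v hv => (M.alphaPa_of_ne_root (Finset.ne_of_mem_erase hv)).symm

lemma card_sub_sum_edgeFinset_alpha :
    (Fintype.card V : ℝ) - ∑ e ∈ G.edgeFinset, alpha e = ∑ v, (1 - M.alphaPa v) := by
  rw [M.sum_edgeFinset_alpha, Finset.sum_sub_distrib, Finset.sum_const, Finset.card_univ,
    nsmul_one]

end Edges

/-- The polynomial `η_v(t·1)` of the paper. -/
noncomputable def etaPoly (v : V) : ℝ[X] :=
  X * ∏ j ∈ (M.children v).attach, (C (1 - M.alphaPa j) + C (M.alphaPa j) * etaPoly j)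
termination_by Fintype.card V - M.depth v
decreasing_by exact M.card_sub_depth_lt j.2

lemma etaPoly_eq (v : V) : M.etaPoly v
    = X * ∏ j ∈ M.children v, (C (1 - M.alphaPa j) + C (M.alphaPa j) * M.etaPoly j) := by
  rw [etaPoly, Finset.prod_attach (M.children v)
    fun j => C (1 - M.alphaPa j) + C (M.alphaPa j) * M.etaPoly j]

lemma etaPoly_mem_nonnegCoeffs (v : V) : M.etaPoly v ∈ nonnegCoeffs := by
  induction v using M.children_induction with
  | h v ih =>
    rw [etaPoly_eq]
    refine Subsemiring.mul_mem _ X_mem_nonnegCoeffs (Subsemiring.prod_mem _ fun j hj => ?_)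
    have ha := M.alphaPa_mem_Icc j
    exact add_mem (C_mem_nonnegCoeffs (sub_nonneg.2 ha.2))
      (mul_mem (C_mem_nonnegCoeffs ha.1) (ih j hj))

lemma eval_one_etaPoly (v : V) : (M.etaPoly v).eval 1 = 1 := by
  induction v using M.children_induction with
  | h v ih =>
    rw [etaPoly_eq, eval_mul, eval_X, one_mul, eval_prod]
    exact Finset.prod_eq_one fun j hj => by simp [ih j hj]

lemma abs_eval_etaPoly_le_one {t : ℝ} (ht : |t| ≤ 1) (v : V) : |(M.etaPoly v).eval t| ≤ 1 :=
  M.eval_one_etaPoly v ▸ abs_eval_le_eval_one (M.etaPoly_mem_nonnegCoeffs v) ht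

lemma eval_etaPoly (t : ℝ) (v : V) : (M.etaPoly v).eval t
    = t * ∏ j ∈ M.children v, (1 - M.alphaPa j + M.alphaPa j * (M.etaPoly j).eval t) := by
  rw [etaPoly_eq, eval_mul, eval_X, eval_prod]
  simp

lemma eq_eval_etaPoly_of_rec {η : ℝ → V → ℝ}
    (hη : ∀ t v, η t v = t * ∏ j ∈ M.children v, (1 - alpha s(v, j) + alpha s(v, j) * η t j))
    (t : ℝ) (v : V) : η t v = (M.etaPoly v).eval t := by
  induction v using M.children_induction with
  | h v ih =>
    rw [hη, eval_etaPoly]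
    refine congrArg (t * ·) (Finset.prod_congr rfl fun j hj => ?_)
    rw [ih j hj, M.alphaPa_of_mem_children hj]

lemma eval_one_derivative_etaPoly (v : V) : (derivative (M.etaPoly v)).eval 1
    = 1 + ∑ j ∈ M.children v, M.alphaPa j * (derivative (M.etaPoly j)).eval 1 := by
  have hfactor : ∀ j ∈ M.children v,
      (C (1 - M.alphaPa j) + C (M.alphaPa j) * M.etaPoly j).eval 1 = 1 := fun j _ => by
    simp [M.eval_one_etaPoly j]
  rw [etaPoly_eq, derivative_mul, derivative_X, eval_add, eval_mul, eval_mul, eval_prod,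
    Finset.prod_eq_one hfactor, eval_X, eval_one, one_mul, one_mul,
    eval_derivative_prod_of_eval_eq_one hfactor]
  simp

lemma sum_one_sub_alphaPa_mul_eval_one_derivative_etaPoly :
    ∑ v, (1 - M.alphaPa v) * (derivative (M.etaPoly v)).eval 1 = Fintype.card V := by
  have hsum : ∑ v, (derivative (M.etaPoly v)).eval 1
      = Fintype.card V + ∑ v, M.alphaPa v * (derivative (M.etaPoly v)).eval 1 := by
    rw [Finset.sum_congr rfl fun v _ => M.eval_one_derivative_etaPoly v, Finset.sum_add_distrib,
      M.sum_sum_children, ← Finset.add_sum_erase _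
        (fun v => M.alphaPa v * (derivative (M.etaPoly v)).eval 1) (Finset.mem_univ M.root)]
    simp
  simp only [sub_mul, one_mul, Finset.sum_sub_distrib]
  rw [hsum, add_sub_cancel_right]

/-- The secondary pgf `P_C`. -/
noncomputable def secondaryPoly : ℝ[X] :=
  ∑ v, C ((1 - M.alphaPa v) / ∑ u, (1 - M.alphaPa u)) * M.etaPoly v

lemma secondaryPoly_mem_nonnegCoeffs : M.secondaryPoly ∈ nonnegCoeffs :=
  Subsemiring.sum_mem _ fun v _ => mul_mem (C_mem_nonnegCoeffs (div_nonneg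
    (sub_nonneg.2 (M.alphaPa_mem_Icc v).2) M.sum_one_sub_alphaPa_pos.le))
    (M.etaPoly_mem_nonnegCoeffs v)

lemma eval_secondaryPoly (t : ℝ) : M.secondaryPoly.eval t
    = ∑ v, (1 - M.alphaPa v) / (∑ u, (1 - M.alphaPa u)) * (M.etaPoly v).eval t := by
  simp [secondaryPoly, eval_finsetSum]

lemma eval_one_secondaryPoly : M.secondaryPoly.eval 1 = 1 := by
  simp_rw [eval_secondaryPoly, eval_one_etaPoly, mul_one]
  rw [← Finset.sum_div, div_self M.sum_one_sub_alphaPa_pos.ne']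

lemma eval_one_derivative_secondaryPoly :
    (derivative M.secondaryPoly).eval 1 = Fintype.card V / ∑ u, (1 - M.alphaPa u) := by
  simp only [secondaryPoly, derivative_sum, derivative_C_mul, eval_finsetSum, eval_mul, eval_C]
  rw [← M.sum_one_sub_alphaPa_mul_eval_one_derivative_etaPoly, Finset.sum_div]
  exact Finset.sum_congr rfl fun v _ => by ring

def family : V ⊕ V × ℕ → Ω → ℕ := Sum.elim M.L fun p => M.I p.1 p.2

/-- The σ-algebra of the innovations and thinning indicators at the vertices in `s`. -/
abbrev vertexSigma (s : Set V) : MeasurableSpace Ω :=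
  comapOn M.family (Sum.elim id Prod.fst ⁻¹' s)

lemma measurable_family (i : V ⊕ V × ℕ) : Measurable (M.family i) := by
  rcases i with v | ⟨v, i⟩
  exacts [M.meas_L v, M.meas_I v i]

lemma vertexSigma_le (s : Set V) : M.vertexSigma s ≤ MeasureSpace.toMeasurableSpace :=
  comapOn_le M.measurable_family

lemma vertexSigma_mono {s t : Set V} (h : s ⊆ t) : M.vertexSigma s ≤ M.vertexSigma t :=
  comapOn_mono (Set.preimage_mono h)

lemma indep_vertexSigma {s t : Set V} (h : Disjoint s t) :
    Indep (M.vertexSigma s) (M.vertexSigma t) ℙ :=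
  M.indep.indep_comapOn M.measurable_family (h.preimage _)

lemma measurable_L_vertexSigma {s : Set V} {v : V} (hv : v ∈ s) :
    Measurable[M.vertexSigma s] (M.L v) :=
  measurable_comapOn (X := M.family) (i := Sum.inl v) hv

lemma measurable_I_vertexSigma {s : Set V} {v : V} (hv : v ∈ s) (i : ℕ) :
    Measurable[M.vertexSigma s] (M.I v i) :=
  measurable_comapOn (X := M.family) (i := Sum.inr (v, i)) hv

/-- `α_v ∘ n + L_v`: the count at `v` when its parent holds `n`. -/
def transition (v : V) (n : ℕ) (ω : Ω) : ℕ := (∑ i ∈ Finset.range n, M.I v i ω) + M.L v ω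

/-- The total count in the subtree rooted at `v` when the parent of `v` holds `n`. -/
def subtreeTotal (v : V) (n : ℕ) (ω : Ω) : ℕ :=
  M.transition v n ω + ∑ j ∈ (M.children v).attach, subtreeTotal j (M.transition v n ω) ω
termination_by Fintype.card V - M.depth v
decreasing_by exact M.card_sub_depth_lt j.2

lemma subtreeTotal_eq (v : V) (n : ℕ) (ω : Ω) : M.subtreeTotal v n ω
    = M.transition v n ω + ∑ j ∈ M.children v, M.subtreeTotal j (M.transition v n ω) ω := by
  rw [subtreeTotal, Finset.sum_attach (M.children v)
    fun j => M.subtreeTotal j (M.transition v n ω) ω]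

lemma subtreeTotal_eq_subtreeSum {v : V} {n : ℕ} {ω : Ω} (h : M.transition v n ω = M.N v ω) :
    M.subtreeTotal v n ω = M.subtreeSum (M.N · ω) v := by
  induction v using M.children_induction generalizing n with
  | h v ih =>
    rw [subtreeTotal_eq, subtreeSum_eq, h]
    refine congrArg _ (Finset.sum_congr rfl fun j hj => ih j hj ?_)
    obtain ⟨hne, rfl⟩ := mem_children.1 hj
    exact (M.N_rec j hne ω).symm

lemma sum_N_eq_subtreeTotal (ω : Ω) : ∑ v, M.N v ω = M.subtreeTotal M.root 0 ω := by
  have hroot : M.transition M.root 0 ω = M.N M.root ω := by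
    rw [transition, Finset.sum_range_zero, zero_add, M.N_root]
  rw [M.subtreeTotal_eq_subtreeSum hroot, subtreeSum_root]

lemma measurable_transition (v : V) (n : ℕ) :
    Measurable[M.vertexSigma {v}] (M.transition v n) := by
  unfold transition
  exact (Finset.measurable_sum _ fun i _ =>
    M.measurable_I_vertexSigma (Set.mem_singleton v) i).fun_add
      (M.measurable_L_vertexSigma (Set.mem_singleton v))

lemma measurable_subtreeTotal (v : V) (n : ℕ) :
    Measurable[M.vertexSigma (M.descendants v)] (M.subtreeTotal v n) := by
  induction v using M.children_induction generalizing n with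
  | h v ih =>
    have hR : Measurable[M.vertexSigma (M.descendants v)] (M.transition v n) :=
      (M.measurable_transition v n).mono
        (M.vertexSigma_mono (Set.singleton_subset_iff.2 (M.self_mem_descendants v))) le_rfl
    rw [show M.subtreeTotal v n = _ from funext (M.subtreeTotal_eq v n)]
    refine hR.fun_add (Finset.measurable_sum _ fun j hj => measurable_apply_nat hR fun m => ?_)
    exact (ih j hj m).mono (M.vertexSigma_mono
      ((descendants_subset_of_mem_children hj).trans Set.sdiff_subset)) le_rfl

section Probability

variable [IsProbabilityMeasure (ℙ : Measure Ω)]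

lemma integral_pow_L (v : V) {s : ℝ} (hs : |s| ≤ 1) :
    ∫ ω, s ^ M.L v ω = Real.exp (lam * (1 - M.alphaPa v) * (s - 1)) := by
  have hmu : 0 ≤ lam * (1 - M.alphaPa v) :=
    mul_nonneg M.lam_pos.le (sub_nonneg.2 (M.alphaPa_mem_Icc v).2)
  refine integral_pow_of_poisson (M.meas_L v) hmu (fun k => ?_) hs
  by_cases hv : v = M.root
  · subst hv
    rw [alphaPa_root, sub_zero, mul_one]
    exact M.L_root_poisson k
  · rw [M.alphaPa_of_ne_root hv]
    exact M.L_poisson v hv k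

lemma integral_pow_I {v : V} (hv : v ≠ M.root) (i : ℕ) (s : ℝ) :
    ∫ ω, s ^ M.I v i ω = 1 - M.alphaPa v + M.alphaPa v * s := by
  refine integral_pow_of_bernoulli (M.meas_I v i) (M.I_le_one v i) (M.alphaPa_mem_Icc v).1 ?_ s
  rw [M.alphaPa_of_ne_root hv]
  exact M.I_bern v hv i

/-- The indicators at the root are unconstrained, hence `n = 0` there. -/
lemma integral_pow_transition {v : V} {n : ℕ} (h : v ≠ M.root ∨ n = 0) {s : ℝ} (hs : |s| ≤ 1) :
    ∫ ω, s ^ M.transition v n ω = (1 - M.alphaPa v + M.alphaPa v * s) ^ n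
      * Real.exp (lam * (1 - M.alphaPa v) * (s - 1)) := by
  have hsplit : ∀ ω, s ^ M.transition v n ω
      = (∏ i ∈ Finset.range n, s ^ M.I v i ω) * s ^ M.L v ω := by
    intro ω
    rw [transition, pow_add, Finset.prod_pow_eq_pow_sum]
  have hI : ∀ i, Measurable[comapOn M.family {.inr (v, i)}] (M.I v i) := fun i =>
    measurable_comapOn (X := M.family) (Set.mem_singleton _)
  have hthin : Measurable[comapOn M.family (Set.range fun i => .inr (v, i))]
      fun ω => ∏ i ∈ Finset.range n, s ^ M.I v i ω :=
    Finset.measurable_prod _ fun i _ => measurable_from_nat.comp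
      (measurable_comapOn (X := M.family) (i := .inr (v, i)) ⟨i, rfl⟩)
  have hinnov : Measurable[comapOn M.family {.inl v}] fun ω => s ^ M.L v ω :=
    measurable_from_nat.comp
      (measurable_comapOn (X := M.family) (i := .inl v) (Set.mem_singleton _))
  have hdisj : Disjoint (Set.range fun i => (.inr (v, i) : V ⊕ V × ℕ)) {.inl v} := by
    simp
  have hS : (Finset.range n : Set ℕ).PairwiseDisjoint fun i => ({.inr (v, i)} : Set (V ⊕ V × ℕ)) :=
    fun i _ j _ hij => by simpa using hij
  have hpgf : ∀ i ∈ Finset.range n, ∫ ω, s ^ M.I v i ω = 1 - M.alphaPa v + M.alphaPa v * s :=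
    fun i hi => M.integral_pow_I (h.resolve_right fun hn => by simp [hn] at hi) i s
  simp_rw [hsplit]
  rw [integral_mul_eq_mul_integral_of_indep (M.indep.indep_comapOn M.measurable_family hdisj)
      (comapOn_le M.measurable_family) (comapOn_le M.measurable_family) hthin hinnov,
    M.indep.integral_prod_of_pairwiseDisjoint M.measurable_family (Finset.range n) hS
      (F := fun i ω => s ^ M.I v i ω) (fun i _ => measurable_from_nat.comp (hI i)),
    Finset.prod_congr rfl hpgf, Finset.prod_const, Finset.card_range, M.integral_pow_L v hs]

/-- Conditioning on the count at `v`: the children's subtrees are driven by randomness disjoint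
from that at `v` and from each other. -/
lemma integral_pow_subtreeTotal_eq_tsum {t : ℝ} (ht : |t| ≤ 1) (v : V) (n : ℕ) :
    ∫ ω, t ^ M.subtreeTotal v n ω = ∑' m, (ℙ : Measure Ω).real (M.transition v n ⁻¹' {m})
      * (t ^ m * ∏ j ∈ M.children v, ∫ ω, t ^ M.subtreeTotal j m ω) := by
  have hZ : ∀ m, Measurable[M.vertexSigma (M.descendants v \ {v})]
      fun ω => t ^ (m + ∑ j ∈ M.children v, M.subtreeTotal j m ω) := fun m =>
    measurable_from_nat.comp (measurable_const.add (Finset.measurable_sum _ fun j hj =>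
      (M.measurable_subtreeTotal j m).mono
        (M.vertexSigma_mono (descendants_subset_of_mem_children hj)) le_rfl))
  have hdisj : (↑(M.children v) : Set V).PairwiseDisjoint
      fun j => (Sum.elim id Prod.fst ⁻¹' M.descendants j : Set (V ⊕ V × ℕ)) :=
    fun j hj j' hj' hne => (disjoint_descendants_of_mem_children hj hj' hne).preimage _
  rw [integral_congr_ae (ae_of_all _ fun ω => congrArg (t ^ ·) (M.subtreeTotal_eq v n ω)),
    integral_comp_nat_eq_tsum_of_indep
    (M.indep_vertexSigma (Set.disjoint_singleton_left.2 fun h => h.2 rfl)) (M.vertexSigma_le _)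
    (M.vertexSigma_le _) (M.measurable_transition v n) hZ fun m ω => abs_pow_le_one ht _]
  congr 1 with m
  simp_rw [pow_add, ← Finset.prod_pow_eq_pow_sum]
  rw [integral_const_mul, M.indep.integral_prod_of_pairwiseDisjoint M.measurable_family _ hdisj
    (F := fun j ω => t ^ M.subtreeTotal j m ω)
    fun j _ => measurable_from_nat.comp (M.measurable_subtreeTotal j m)]

lemma integral_pow_subtreeTotal {t : ℝ} (ht : |t| ≤ 1) {v : V} {n : ℕ}
    (h : v ≠ M.root ∨ n = 0) : ∫ ω, t ^ M.subtreeTotal v n ω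
      = (1 - M.alphaPa v + M.alphaPa v * (M.etaPoly v).eval t) ^ n * Real.exp
        (lam * M.subtreeSum (fun u => (1 - M.alphaPa u) * ((M.etaPoly u).eval t - 1)) v) := by
  induction v using M.children_induction generalizing n with
  | h v ih =>
    set f := fun u => (1 - M.alphaPa u) * ((M.etaPoly u).eval t - 1)
    have hη := M.abs_eval_etaPoly_le_one ht v
    have hchildren : ∀ m, t ^ m * ∏ j ∈ M.children v, ∫ ω, t ^ M.subtreeTotal j m ω
        = (M.etaPoly v).eval t ^ m * ∏ j ∈ M.children v, Real.exp (lam * M.subtreeSum f j) := by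
      intro m
      rw [Finset.prod_congr rfl fun j hj => ih j hj (Or.inl (mem_children.1 hj).1),
        Finset.prod_mul_distrib, Finset.prod_pow, ← mul_assoc, ← mul_pow, ← eval_etaPoly]
    calc ∫ ω, t ^ M.subtreeTotal v n ω
        = (∑' m, (ℙ : Measure Ω).real (M.transition v n ⁻¹' {m}) * (M.etaPoly v).eval t ^ m)
          * ∏ j ∈ M.children v, Real.exp (lam * M.subtreeSum f j) := by
          rw [M.integral_pow_subtreeTotal_eq_tsum ht, ← tsum_mul_right]
          exact tsum_congr fun m => by rw [hchildren m, mul_assoc]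
      _ = (1 - M.alphaPa v + M.alphaPa v * (M.etaPoly v).eval t) ^ n
          * Real.exp (lam * f v) * ∏ j ∈ M.children v, Real.exp (lam * M.subtreeSum f j) := by
          rw [← integral_comp_nat_eq_tsum
            ((M.measurable_transition v n).mono (M.vertexSigma_le _) le_rfl) (abs_pow_le_one hη),
            M.integral_pow_transition h hη, mul_assoc lam]
      _ = _ := by
          rw [subtreeSum_eq, mul_add, Real.exp_add, Finset.mul_sum, Real.exp_sum, mul_assoc]

lemma integral_pow_sum_N {t : ℝ} (ht : |t| ≤ 1) :
    ∫ ω, t ^ (∑ v, M.N v ω)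
      = Real.exp (lam * (∑ u, (1 - M.alphaPa u)) * (M.secondaryPoly.eval t - 1)) := by
  simp_rw [M.sum_N_eq_subtreeTotal]
  rw [M.integral_pow_subtreeTotal ht (Or.inr rfl), pow_zero, one_mul, subtreeSum_root,
    eval_secondaryPoly, mul_assoc]
  congr 2
  rw [mul_sub_one, Finset.mul_sum, ← Finset.sum_sub_distrib]
  refine Finset.sum_congr rfl fun v _ => ?_
  rw [← mul_assoc, mul_div_cancel₀ _ M.sum_one_sub_alphaPa_pos.ne']
  ring

end Probability

end MPMRF

theorem mpmrf_sum_compound_poisson_general {V : Type} [Fintype V] [DecidableEq V]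
    (G : SimpleGraph V) [DecidableRel G.Adj] (lam : ℝ) (alpha : Sym2 V → ℝ)
    (Ω : Type) [MeasureSpace Ω]
    (M : MPMRF G lam alpha Ω)
    (η : ℝ → V → ℝ)
    (hη : ∀ (t : ℝ) (v : V), η t v
      = t * ∏ j ∈ Finset.univ.filter (fun j => j ≠ M.root ∧ M.pa j = v),
          (1 - alpha s(v, j) + alpha s(v, j) * η t j)) :
    (0 < lam * ((Fintype.card V : ℝ) - ∑ e ∈ G.edgeFinset, alpha e))
    ∧ (∀ t ∈ Set.Icc (-1 : ℝ) 1,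
        ∫ ω, (t : ℝ) ^ (∑ v : V, M.N v ω) ∂ℙ
          = Real.exp (lam * ((Fintype.card V : ℝ) - ∑ e ∈ G.edgeFinset, alpha e)
              * ((∑ v : V,
                    ((1 - if v = M.root then 0 else alpha s(M.pa v, v))
                        / ((Fintype.card V : ℝ) - ∑ e ∈ G.edgeFinset, alpha e))
                      * η t v) - 1)))
    ∧ (∃ p : ℕ → ℝ, (∀ k, 0 ≤ p k) ∧ (∑' k : ℕ, p k) = 1
        ∧ (∀ t ∈ Set.Icc (-1 : ℝ) 1,
            (∑' k : ℕ, p k * t ^ k)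
              = ∑ v : V,
                  ((1 - if v = M.root then 0 else alpha s(M.pa v, v))
                      / ((Fintype.card V : ℝ) - ∑ e ∈ G.edgeFinset, alpha e))
                    * η t v)
        ∧ (∑' k : ℕ, (k : ℝ) * p k)
            = (Fintype.card V : ℝ)
              / ((Fintype.card V : ℝ) - ∑ e ∈ G.edgeFinset, alpha e)) := by
  have := M.indep.isProbabilityMeasure
  obtain rfl : η = fun t v => (M.etaPoly v).eval t := funext₂ (M.eq_eval_etaPoly_of_rec hη)
  rw [M.card_sub_sum_edgeFinset_alpha]
  refine ⟨mul_pos M.lam_pos M.sum_one_sub_alphaPa_pos, fun t ht => ?_,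
    M.secondaryPoly.coeff, M.secondaryPoly_mem_nonnegCoeffs, ?_, fun t _ => ?_, ?_⟩
  · exact (M.integral_pow_sum_N (abs_le.2 ht)).trans (by rw [M.eval_secondaryPoly]; rfl)
  · simpa using (Polynomial.tsum_coeff_mul_pow M.secondaryPoly 1).trans M.eval_one_secondaryPoly
  · exact (Polynomial.tsum_coeff_mul_pow _ t).trans (M.eval_secondaryPoly t)
  · exact (Polynomial.tsum_natCast_mul_coeff _).trans M.eval_one_derivative_secondaryPoly

/-- Distribution of the sum: `M = Σ_v N_v` is compound Poisson with
primary parameter `λ_M = λ(d − Σ_{e∈E} α_e) > 0` and secondary pgf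
`P_C(t) = Σ_v ((1 − α_{(pa v, v)})/(d − Σ_e α_e)) η_v(t·1)` (with the convention
`α_{(pa r, r)} = 0`), where the `η_v` satisfy the recursion of the joint pgf evaluated
at `t·1`; moreover `P_C` is the pgf of an `ℕ`-valued random variable with mean
`d/(d − Σ_e α_e)`. -/
theorem mpmrf_sum_compound_poisson {V : Type} [Fintype V] [DecidableEq V]
    (G : SimpleGraph V) [DecidableRel G.Adj] (lam : ℝ) (alpha : Sym2 V → ℝ)
    (Ω : Type) [MeasureSpace Ω] [IsProbabilityMeasure (ℙ : Measure Ω)]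
    (M : MPMRF G lam alpha Ω)
    (η : ℝ → V → ℝ)
    (hη : ∀ (t : ℝ) (v : V), η t v
      = t * ∏ j ∈ Finset.univ.filter (fun j => j ≠ M.root ∧ M.pa j = v),
          (1 - alpha s(v, j) + alpha s(v, j) * η t j)) :
    (0 < lam * ((Fintype.card V : ℝ) - ∑ e ∈ G.edgeFinset, alpha e))
    ∧ (∀ t ∈ Set.Icc (-1 : ℝ) 1,
        ∫ ω, (t : ℝ) ^ (∑ v : V, M.N v ω) ∂ℙ
          = Real.exp (lam * ((Fintype.card V : ℝ) - ∑ e ∈ G.edgeFinset, alpha e)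
              * ((∑ v : V,
                    ((1 - if v = M.root then 0 else alpha s(M.pa v, v))
                        / ((Fintype.card V : ℝ) - ∑ e ∈ G.edgeFinset, alpha e))
                      * η t v) - 1)))
    ∧ (∃ p : ℕ → ℝ, (∀ k, 0 ≤ p k) ∧ (∑' k : ℕ, p k) = 1
        ∧ (∀ t ∈ Set.Icc (-1 : ℝ) 1,
            (∑' k : ℕ, p k * t ^ k)
              = ∑ v : V,
                  ((1 - if v = M.root then 0 else alpha s(M.pa v, v))
                      / ((Fintype.card V : ℝ) - ∑ e ∈ G.edgeFinset, alpha e))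
                    * η t v)
        ∧ (∑' k : ℕ, (k : ℝ) * p k)
            = (Fintype.card V : ℝ)
              / ((Fintype.card V : ℝ) - ∑ e ∈ G.edgeFinset, alpha e)) :=
  mpmrf_sum_compound_poisson_general G lam alpha Ω M η hη
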